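/- Contracting the arrangement 𝒜₂ (with non-coplanar lines L₁, L₂, L₃, m generic planes through each) along a plane H through L₁ yields an arrangement in H ≅ ℂ² in which m−1 of the lines coincide with L₁ and the other 2m lines are pairwise distinct and distinct from L₁; for this contracted arrangement ρ = 2m and the unique large direction is L₁, so dim(C_{𝒜/H,−2m})₁ = 1. -/

import Mathlib

/-!
On `ℂ²` a nonzero linear form is determined, up to a scalar, by any nonzero vector of its
kernel. So a nonzero `h ∈ ℂ ∙ u` lies on exactly the `m - 1` lines indexed by `S`, while any
other `h` lies on at most one line, and that line is not indexed by `S`: `ρ(h) = 2m` on `ℂ ∙ u`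
and `ρ(h) ≥ 3m - 2 > 2m` elsewhere.

A degree-one polynomial is a linear form `∑ aᵢ Xᵢ`, which `∂_h` sends to the constant `h ⬝ᵥ a`,
so `∂_h²` kills it. In `C_{𝒜/H,-2m}` the only condition that remains is therefore
`∂_u q = 0`, i.e. `u ⬝ᵥ a = 0`, and this cuts out a line.
-/

open MvPolynomial

/-- The directional derivative ∂_h on polynomials on ℂᵈ. -/
noncomputable def dirDeriv {d : ℕ} (h : Fin d → ℂ) :
    Module.End ℂ (MvPolynomial (Fin d) ℂ) :=
  ∑ i, h i • (pderiv i).toLinearMap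

open Classical in
/-- ρ_𝒜(h): the number of hyperplanes of the arrangement not containing `h`. -/
noncomputable def rhoA {d : ℕ} {ι : Type*} [Fintype ι]
    (L : ι → ((Fin d → ℂ) →ₗ[ℂ] ℂ)) (h : Fin d → ℂ) : ℕ :=
  (Finset.univ.filter fun i => L i h ≠ 0).card

/-- The degree-1 graded component of the inverse system C_{𝒜,k}. -/
noncomputable def Cdeg1 {d : ℕ} {ι : Type*} [Fintype ι]
    (L : ι → ((Fin d → ℂ) →ₗ[ℂ] ℂ)) (k : ℤ) :
    Submodule ℂ (MvPolynomial (Fin d) ℂ) :=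
  (homogeneousSubmodule (Fin d) ℂ 1) ⊓
    ⨅ (h : Fin d → ℂ) (_ : h ≠ 0),
      LinearMap.ker (dirDeriv h ^ (((rhoA L h : ℤ) + k + 1).toNat))


open Submodule

section Arrangement

open Finset

variable {d : ℕ} {ι : Type*} [Fintype ι] (L : ι → ((Fin d → ℂ) →ₗ[ℂ] ℂ))

theorem rhoA_add_card_filter_eq_zero (h : Fin d → ℂ) :
    rhoA L h + #{i | L i h = 0} = Fintype.card ι := by
  classical
  rw [rhoA, add_comm, ← card_univ]
  convert card_filter_add_card_filter_not (s := univ) (fun i => L i h = 0)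

theorem rhoA_smul {c : ℂ} (hc : c ≠ 0) (h : Fin d → ℂ) : rhoA L (c • h) = rhoA L h := by
  simp [rhoA, hc]

end Arrangement

section PlaneDual

open Finset

variable {K V ι : Type*} [Field K] [AddCommGroup V] [Module K V]

theorem ker_eq_span_singleton_of_finrank_eq_two (hV : Module.finrank K V = 2)
    {f : Module.Dual K V} (hf : f ≠ 0) {v : V} (hv : v ≠ 0) (hfv : f v = 0) :
    LinearMap.ker f = K ∙ v := by
  have : FiniteDimensional K V := Module.finite_of_finrank_eq_succ hV
  have hker : Module.finrank K (LinearMap.ker f) = 1 := by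
    have := f.finrank_ker_add_one_of_ne_zero hf
    omega
  refine (eq_of_le_of_finrank_eq ?_ ?_).symm
  · rwa [span_singleton_le_iff_mem]
  · rw [hker, finrank_span_singleton hv]

theorem card_filter_apply_eq_zero_le_one [Fintype ι] [DecidableEq K]
    (hV : Module.finrank K V = 2)
    {L : ι → Module.Dual K V} (hL : ∀ i, L i ≠ 0) {u h : V} (hu : u ≠ 0) (hh : h ∉ K ∙ u)
    (hdistinct : ∀ i j, L i u ≠ 0 → L j u ≠ 0 → i ≠ j →
      LinearMap.ker (L i) ≠ LinearMap.ker (L j)) :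
    #{i | L i h = 0} ≤ 1 := by
  have h0 : h ≠ 0 := by rintro rfl; exact hh (zero_mem _)
  have hker {i} (hi : L i h = 0) : LinearMap.ker (L i) = K ∙ h :=
    ker_eq_span_singleton_of_finrank_eq_two hV (hL i) h0 hi
  have hLu {i} (hi : L i h = 0) : L i u ≠ 0 := fun hiu =>
    hh (ker_eq_span_singleton_of_finrank_eq_two hV (hL i) hu hiu ▸ hi)
  refine card_le_one.mpr fun i hi j hj => by_contra fun hij => ?_
  simp only [mem_filter, mem_univ, true_and] at hi hj
  exact hdistinct i j (hLu hi) (hLu hj) hij ((hker hi).trans (hker hj).symm)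

end PlaneDual

section LinearForms

variable {d : ℕ}

noncomputable def linearForm (d : ℕ) : (Fin d → ℂ) →ₗ[ℂ] MvPolynomial (Fin d) ℂ :=
  Fintype.linearCombination ℂ X

theorem linearForm_injective : Function.Injective (linearForm d) :=
  (linearIndependent_X _ _).fintypeLinearCombination_injective

theorem range_linearForm :
    LinearMap.range (linearForm d) = homogeneousSubmodule (Fin d) ℂ 1 := by
  rw [linearForm, Fintype.range_linearCombination, homogeneousSubmodule_one_eq_span_X]

theorem dirDeriv_C (h : Fin d → ℂ) (c : ℂ) : dirDeriv h (C c) = 0 := by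
  simp [dirDeriv]

theorem dirDeriv_linearForm (h a : Fin d → ℂ) : dirDeriv h (linearForm d a) = C (h ⬝ᵥ a) := by
  simp [dirDeriv, linearForm, Fintype.linearCombination_apply, pderiv_X, dotProduct,
    Pi.single_apply, smul_eq_C_mul, mul_comm]

theorem dirDeriv_pow_linearForm {n : ℕ} (hn : 2 ≤ n) (h a : Fin d → ℂ) :
    (dirDeriv h ^ n) (linearForm d a) = 0 := by
  obtain ⟨n, rfl⟩ := Nat.exists_eq_add_of_le' hn
  rw [pow_add, pow_two, Module.End.mul_apply, Module.End.mul_apply,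
    dirDeriv_linearForm, dirDeriv_C, map_zero]

end LinearForms

section InverseSystem

variable {d : ℕ} {ι : Type*} [Fintype ι] {L : ι → ((Fin d → ℂ) →ₗ[ℂ] ℂ)} {k : ℤ}
  {u : Fin d → ℂ}

theorem Cdeg1_eq_map_ker_dotProduct (hu : u ≠ 0) (hρu : (rhoA L u : ℤ) + k = 0)
    (hρ : ∀ h ∉ ℂ ∙ u, 1 ≤ (rhoA L h : ℤ) + k) :
    Cdeg1 L k = (LinearMap.ker (dotProductBilin ℂ ℂ u)).map (linearForm d) := by
  have hexp : ((rhoA L u : ℤ) + k + 1).toNat = 1 := by omega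
  have hexp_smul {c : ℂ} (hc : c ≠ 0) : ((rhoA L (c • u) : ℤ) + k + 1).toNat = 1 := by
    rwa [rhoA_smul L hc]
  ext q
  simp only [Cdeg1, mem_inf, mem_iInf, ← range_linearForm, LinearMap.mem_range, mem_map,
    LinearMap.mem_ker]
  constructor
  · rintro ⟨⟨a, rfl⟩, hq⟩
    refine ⟨a, ?_, rfl⟩
    have hua := hq u hu
    rwa [hexp, pow_one, dirDeriv_linearForm, C_eq_zero] at hua
  · rintro ⟨a, ha, rfl⟩
    refine ⟨⟨a, rfl⟩, fun h h0 => ?_⟩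
    by_cases hh : h ∈ ℂ ∙ u
    · obtain ⟨c, rfl⟩ := mem_span_singleton.mp hh
      have hc : c ≠ 0 := by rintro rfl; simp at h0
      rw [hexp_smul hc, pow_one, dirDeriv_linearForm, smul_dotProduct,
        show u ⬝ᵥ a = 0 from ha, smul_zero, C_0]
    · exact dirDeriv_pow_linearForm (by have := hρ h hh; omega) h a

theorem finrank_Cdeg1 (hu : u ≠ 0) (hρu : (rhoA L u : ℤ) + k = 0)
    (hρ : ∀ h ∉ ℂ ∙ u, 1 ≤ (rhoA L h : ℤ) + k) :
    Module.finrank ℂ (Cdeg1 L k) = d - 1 := by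
  have hf : dotProductBilin ℂ ℂ u ≠ 0 := fun hf =>
    hu (dotProduct_eq_zero u fun w => LinearMap.congr_fun hf w)
  have hker := Module.Dual.finrank_ker_add_one_of_ne_zero hf
  rw [Module.finrank_fin_fun] at hker
  rw [Cdeg1_eq_map_ker_dotProduct hu hρu hρ,
    ← (equivMapOfInjective _ linearForm_injective _).finrank_eq]
  omega

end InverseSystem

/-- the contraction of the non-coplanar three-lines arrangement along a
plane H through L₁ is an arrangement of 3m−1 lines in H ≅ ℂ² in which m−1 lines equal
L₁ (spanned by u) and the other 2m lines are pairwise distinct and differ from L₁;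
then ρ = 2m, achieved exactly on L₁, and dim (C_{𝒜/H,−2m})₁ = 1. -/
theorem stmt_13 (m : ℕ) (hm : 3 ≤ m)
    (g : Fin (3 * m - 1) → ((Fin 2 → ℂ) →ₗ[ℂ] ℂ)) (hg : ∀ i, g i ≠ 0)
    (u : Fin 2 → ℂ) (hu : u ≠ 0)
    (S : Finset (Fin (3 * m - 1))) (hcard : S.card = m - 1)
    (hS : ∀ i, i ∈ S ↔ g i u = 0)
    (hdistinct : ∀ i j, i ∉ S → j ∉ S → i ≠ j →
      LinearMap.ker (g i) ≠ LinearMap.ker (g j)) :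
    (∀ h : Fin 2 → ℂ, h ≠ 0 → 2 * m ≤ rhoA g h) ∧
    (∀ h : Fin 2 → ℂ, h ≠ 0 →
      (rhoA g h = 2 * m ↔ h ∈ Submodule.span ℂ {u})) ∧
    Module.finrank ℂ (Cdeg1 g (-(2 * m : ℤ))) = 1 := by
  have hρu : rhoA g u = 2 * m := by
    have hzero : Finset.univ.filter (g · u = 0) = S := by ext i; simp [hS]
    have := rhoA_add_card_filter_eq_zero g u
    rw [hzero, hcard, Fintype.card_fin] at this
    omega
  have hρspan : ∀ h ∈ ℂ ∙ u, h ≠ 0 → rhoA g h = 2 * m := by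
    rintro _ hh h0
    obtain ⟨c, rfl⟩ := mem_span_singleton.mp hh
    rw [rhoA_smul g (left_ne_zero_of_smul h0), hρu]
  have hρ : ∀ h ∉ ℂ ∙ u, 2 * m < rhoA g h := fun h hh => by
    have hzero := card_filter_apply_eq_zero_le_one (Module.finrank_fin_fun ℂ) hg hu hh
      fun i j hi hj => hdistinct i j (mt (hS i).1 hi) (mt (hS j).1 hj)
    have := rhoA_add_card_filter_eq_zero g h
    rw [Fintype.card_fin] at this
    omega
  refine ⟨fun h h0 => ?_, fun h h0 => ⟨fun he => ?_, (hρspan h · h0)⟩, ?_⟩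
  · by_cases hh : h ∈ ℂ ∙ u
    · exact (hρspan h hh h0).ge
    · exact (hρ h hh).le
  · by_contra hh
    exact (hρ h hh).ne' he
  · exact finrank_Cdeg1 hu (by omega) fun h hh => by have := hρ h hh; omega
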